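/- The pair (C, A) is similar to a contractive pair if and only if the Stein inequality H - A_1* H A_1 - ... - A_d* H A_d >= C* C admits a bounded, strictly positive-definite (i.e., invertible positive) solution H. Likewise, (C, A) is similar to an isometric pair if and only if the corresponding Stein equality H - sum_j A_j* H A_j = C* C admits a bounded strictly positive-definite solution. -/

import Mathlib

/-!
For invertible `S`, the Stein operator `K - ∑ⱼ Aⱼ'* K Aⱼ' - C'* C'` of the similar pair
`(C', A') = (C S⁻¹, S A S⁻¹)` is the congruence `S⁻* (·) S⁻¹` of the Stein operator
`H - ∑ⱼ Aⱼ* H Aⱼ - C* C` of `(C, A)` at `H = S* K S`. Taking `K = 1`: positivity and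
vanishing are preserved by congruences, so a similarity `S` to a contractive (isometric) pair
yields the solution `H = S* S`, and conversely a positive invertible solution `H` factors as
`S* S` with `S = H^{1/2}` invertible.
-/

open ContinuousLinearMap

noncomputable section

variable {X Y : Type*}
  [NormedAddCommGroup X] [InnerProductSpace ℂ X] [CompleteSpace X]
  [NormedAddCommGroup Y] [InnerProductSpace ℂ Y] [CompleteSpace Y]

/-- `A^v`: for a word `v = i_N … i_1` (stored as the list `[i_N, …, i_1]`), the
product `A_{i_N} ∘ A_{i_{N-1}} ∘ ⋯ ∘ A_{i_1}`. -/
def wordProd {d : ℕ} (A : Fin d → X →L[ℂ] X) (v : List (Fin d)) : X →L[ℂ] X :=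
  (v.map A).prod

/-- `A^w` for a word of length `N` encoded as a function `w : Fin N → Fin d`. -/
def funProd {d N : ℕ} (A : Fin d → X →L[ℂ] X) (w : Fin N → Fin d) : X →L[ℂ] X :=
  wordProd A (List.ofFn w)

/-- The pair (C', A') is similar to (C, A) via an invertible S:
C' = C S⁻¹ and A'_j = S A_j S⁻¹. -/
def SimilarTo {d : ℕ} (C : X →L[ℂ] Y) (A : Fin d → X →L[ℂ] X)
    (C' : X →L[ℂ] Y) (A' : Fin d → X →L[ℂ] X) : Prop :=
  ∃ S : X ≃L[ℂ] X, C' = C ∘L (S.symm : X →L[ℂ] X) ∧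
    ∀ j, A' j = (S : X →L[ℂ] X) ∘L A j ∘L (S.symm : X →L[ℂ] X)

open scoped InnerProduct

def steinDefect {d : ℕ} (C : X →L[ℂ] Y) (A : Fin d → X →L[ℂ] X) (H : X →L[ℂ] X) :
    X →L[ℂ] X :=
  H - ∑ j, (A j)† ∘L H ∘L A j - C† ∘L C

lemma steinDefect_one {d : ℕ} (C : X →L[ℂ] Y) (A : Fin d → X →L[ℂ] X) :
    steinDefect C A 1 = 1 - ∑ j, (A j)† ∘L A j - C† ∘L C := by
  simp [steinDefect, one_def]

lemma adjoint_symm_comp_adjoint_comp (S : X ≃L[ℂ] X) (K : X →L[ℂ] X) :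
    (S.symm : X →L[ℂ] X)† ∘L (S : X →L[ℂ] X)† ∘L K = K := by
  rw [← comp_assoc, ← adjoint_comp, S.coe_comp_coe_symm, ← one_def, adjoint_one, one_def,
    id_comp]

lemma adjoint_comp_adjoint_symm_comp (S : X ≃L[ℂ] X) (K : X →L[ℂ] X) :
    (S : X →L[ℂ] X)† ∘L (S.symm : X →L[ℂ] X)† ∘L K = K := by
  simpa using adjoint_symm_comp_adjoint_comp S.symm K

lemma steinDefect_similar {d : ℕ} (S : X ≃L[ℂ] X) (C : X →L[ℂ] Y)
    (A : Fin d → X →L[ℂ] X) (K : X →L[ℂ] X) :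
    steinDefect (C ∘L S.symm) (fun j => S ∘L A j ∘L S.symm) K
      = (S.symm : X →L[ℂ] X)† ∘L steinDefect C A ((S : X →L[ℂ] X)† ∘L K ∘L S) ∘L
          S.symm := by
  simp only [steinDefect, comp_sub, sub_comp, comp_finsetSum, finsetSum_comp,
    adjoint_comp, comp_assoc, adjoint_symm_comp_adjoint_comp, S.coe_comp_coe_symm, comp_id]

lemma isUnit_adjoint_comp_self (S : X ≃L[ℂ] X) :
    IsUnit ((S : X →L[ℂ] X)† ∘L (S : X →L[ℂ] X)) := by
  have hS : IsUnit (S : X →L[ℂ] X) := ⟨S.toUnit, rfl⟩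
  simpa only [star_eq_adjoint, mul_def] using hS.star.mul hS

lemma exists_adjoint_comp_self_eq {H : X →L[ℂ] X} (hH : H.IsPositive) (hu : IsUnit H) :
    ∃ S : X ≃L[ℂ] X, (S : X →L[ℂ] X)† ∘L S = H := by
  have hH₀ : 0 ≤ H := (nonneg_iff_isPositive H).mpr hH
  have hR : IsUnit (CFC.sqrt H) := (CFC.isUnit_sqrt_iff H hH₀).mpr hu
  refine ⟨ContinuousLinearEquiv.unitsEquiv ℂ X hR.unit, ?_⟩
  change (CFC.sqrt H)† ∘L CFC.sqrt H = H
  rw [← star_eq_adjoint, (CFC.sqrt_nonneg H).isSelfAdjoint.star_eq, ← mul_def,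
    CFC.sqrt_mul_sqrt_self H hH₀]

lemma exists_similar_steinDefect_one_iff {d : ℕ} (P : (X →L[ℂ] X) → Prop)
    (hP : ∀ R T : X →L[ℂ] X, P T → P (R† ∘L T ∘L R)) (C : X →L[ℂ] Y)
    (A : Fin d → X →L[ℂ] X) :
    (∃ (C' : X →L[ℂ] Y) (A' : Fin d → X →L[ℂ] X), SimilarTo C A C' A' ∧
        P (steinDefect C' A' 1)) ↔
      ∃ H : X →L[ℂ] X, H.IsPositive ∧ IsUnit H ∧ P (steinDefect C A H) := by
  constructor
  · rintro ⟨C', A', ⟨S, rfl, hA'⟩, hP'⟩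
    obtain rfl : A' = fun j => S ∘L A j ∘L S.symm := funext hA'
    refine ⟨(S : X →L[ℂ] X)† ∘L (S : X →L[ℂ] X), isPositive_adjoint_comp_self _,
      isUnit_adjoint_comp_self S, ?_⟩
    simpa only [steinDefect_similar, one_def, id_comp, comp_assoc,
      adjoint_comp_adjoint_symm_comp, S.coe_symm_comp_coe, comp_id] using hP S _ hP'
  · rintro ⟨H, hH, hu, hPH⟩
    obtain ⟨S, rfl⟩ := exists_adjoint_comp_self_eq hH hu
    refine ⟨_, _, ⟨S, rfl, fun j => rfl⟩, ?_⟩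
    simpa only [steinDefect_similar, one_def, id_comp] using hP S.symm _ hPH

/-- (C, A) is similar to a contractive pair iff the Stein inequality has a bounded
strictly positive-definite (positive and invertible) solution; (C, A) is similar to an
isometric pair iff the Stein equality has a bounded strictly positive-definite
solution. -/
theorem stmt6 {d : ℕ} (C : X →L[ℂ] Y) (A : Fin d → X →L[ℂ] X) :
    ((∃ (C' : X →L[ℂ] Y) (A' : Fin d → X →L[ℂ] X), SimilarTo C A C' A' ∧
        ((1 : X →L[ℂ] X) - ∑ j, adjoint (A' j) ∘L A' j - adjoint C' ∘L C').IsPositive)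
      ↔ ∃ H : X →L[ℂ] X, H.IsPositive ∧ IsUnit H ∧
          (H - ∑ j, adjoint (A j) ∘L H ∘L A j - adjoint C ∘L C).IsPositive) ∧
    ((∃ (C' : X →L[ℂ] Y) (A' : Fin d → X →L[ℂ] X), SimilarTo C A C' A' ∧
        (1 : X →L[ℂ] X) - ∑ j, adjoint (A' j) ∘L A' j = adjoint C' ∘L C')
      ↔ ∃ H : X →L[ℂ] X, H.IsPositive ∧ IsUnit H ∧
          H - ∑ j, adjoint (A j) ∘L H ∘L A j = adjoint C ∘L C) := by
  have contractive := exists_similar_steinDefect_one_iff IsPositive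
    (fun R _ hT => hT.adjoint_conj R) C A
  have isometric := exists_similar_steinDefect_one_iff (· = 0)
    (fun R _ hT => by simp [hT]) C A
  simp only [steinDefect_one] at contractive isometric
  simp only [steinDefect, sub_eq_zero] at isometric
  exact ⟨contractive, isometric⟩

end
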